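/- Let (X,b,c,m) be a weighted graph, E a Hermitian vector bundle over X with unitary connection Φ, and W a pointwise positive bundle endomorphism. Then the form Q^(N)_{Φ,b,W} is closed: the domain D = {u ∈ ℓ²(X,m;E) : Q̃_{Φ,b,W}(u) < ∞}, equipped with the norm ‖u‖ = (‖u‖²_{ℓ²(X,m;E)} + Q̃_{Φ,b,W}(u))^{1/2}, is complete. -/
import Mathlib

open scoped ENNReal ComplexInnerProductSpace Classical

noncomputable section

/-- `u` is an `ℓ²`-section with respect to the vertex measure `m`. -/
def MemL2Sec {X : Type*} {E : X → Type*} [∀ x, NormedAddCommGroup (E x)]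
    (m : X → ℝ) (u : ∀ x, E x) : Prop :=
  Summable fun x => ‖u x‖ ^ 2 * m x

/-- The magnetic Schrödinger energy `Q̃_{Φ,b,W}(u) ∈ [0,∞]` of a section `u`. -/
def magEnergy {X : Type*} {E : X → Type*} [∀ x, NormedAddCommGroup (E x)]
    [∀ x, InnerProductSpace ℂ (E x)]
    (b : X → X → ℝ) (Φ : ∀ x y, E y ≃ₗᵢ[ℂ] E x) (W : ∀ x, E x →ₗ[ℂ] E x)
    (u : ∀ x, E x) : ℝ≥0∞ :=
  1 / 2 * ∑' p : X × X, ENNReal.ofReal (b p.1 p.2 * ‖u p.1 - Φ p.1 p.2 (u p.2)‖ ^ 2)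
    + ∑' x, ENNReal.ofReal (⟪W x (u x), u x⟫).re

/-- The scalar Schrödinger energy `Q̃_{b,c}(f) ∈ [0,∞]` of a function `f : X → ℂ`. -/
def scalEnergy {X : Type*} (b : X → X → ℝ) (c : X → ℝ) (f : X → ℂ) : ℝ≥0∞ :=
  1 / 2 * ∑' p : X × X, ENNReal.ofReal (b p.1 p.2 * ‖f p.1 - f p.2‖ ^ 2)
    + ∑' x, ENNReal.ofReal (c x * ‖f x‖ ^ 2)

/-- Membership in the domain of the Neumann magnetic form `Q^(N)_{Φ,b,W}`. -/
def inMagDom {X : Type*} {E : X → Type*} [∀ x, NormedAddCommGroup (E x)]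
    [∀ x, InnerProductSpace ℂ (E x)] (m : X → ℝ)
    (b : X → X → ℝ) (Φ : ∀ x y, E y ≃ₗᵢ[ℂ] E x) (W : ∀ x, E x →ₗ[ℂ] E x)
    (u : ∀ x, E x) : Prop :=
  MemL2Sec m u ∧ magEnergy b Φ W u < ⊤

/-- Membership in the domain of the Neumann scalar form `Q^(N)_{b,c}`. -/
def inScalDom {X : Type*} (m : X → ℝ) (b : X → X → ℝ) (c : X → ℝ) (f : X → ℂ) : Prop :=
  (Summable fun x => ‖f x‖ ^ 2 * m x) ∧ scalEnergy b c f < ⊤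

end

noncomputable section

/-- The squared form norm `‖u‖²_{ℓ²(X,m;E)} + Q̃_{Φ,b,W}(u)`, valued in `[0,∞]`. -/
def magFormNormSq {X : Type*} {E : X → Type*} [∀ x, NormedAddCommGroup (E x)]
    [∀ x, InnerProductSpace ℂ (E x)] (m : X → ℝ)
    (b : X → X → ℝ) (Φ : ∀ x y, E y ≃ₗᵢ[ℂ] E x) (W : ∀ x, E x →ₗ[ℂ] E x)
    (u : ∀ x, E x) : ℝ≥0∞ :=
  (∑' x, ENNReal.ofReal (‖u x‖ ^ 2 * m x)) + magEnergy b Φ W u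

end

section StmtElevenAux

open Filter Topology

private lemma stmt11.normSqAdd {F : Type*} [SeminormedAddCommGroup F] (a b : F) :
    ‖a + b‖ ^ 2 ≤ 2 * ‖a‖ ^ 2 + 2 * ‖b‖ ^ 2 := by
  nlinarith [norm_add_le a b, norm_nonneg (a + b), norm_nonneg a, norm_nonneg b,
    sq_nonneg (‖a‖ - ‖b‖)]

private lemma stmt11.ofRealLeTwo {s p q : ℝ} (h : s ≤ 2 * p + 2 * q) :
    ENNReal.ofReal s ≤ 2 * ENNReal.ofReal p + 2 * ENNReal.ofReal q := by
  calc ENNReal.ofReal s ≤ ENNReal.ofReal (2 * p + 2 * q) := ENNReal.ofReal_le_ofReal h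
    _ ≤ ENNReal.ofReal (2 * p) + ENNReal.ofReal (2 * q) := ENNReal.ofReal_add_le
    _ = 2 * ENNReal.ofReal p + 2 * ENNReal.ofReal q := by
        rw [ENNReal.ofReal_mul (by norm_num), ENNReal.ofReal_mul (by norm_num),
          ENNReal.ofReal_ofNat]

/-- Fatou-type lemma: a sum of three `tsum`s whose terms converge pointwise is bounded by any
eventual bound of the corresponding sums. -/
private lemma stmt11.key3 {ι₁ ι₂ ι₃ : Type*}
    {g1 : ℕ → ι₁ → ℝ≥0∞} {g2 : ℕ → ι₂ → ℝ≥0∞} {g3 : ℕ → ι₃ → ℝ≥0∞}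
    {l1 : ι₁ → ℝ≥0∞} {l2 : ι₂ → ℝ≥0∞} {l3 : ι₃ → ℝ≥0∞}
    (h1 : ∀ i, Tendsto (fun j => g1 j i) atTop (𝓝 (l1 i)))
    (h2 : ∀ i, Tendsto (fun j => g2 j i) atTop (𝓝 (l2 i)))
    (h3 : ∀ i, Tendsto (fun j => g3 j i) atTop (𝓝 (l3 i)))
    {C : ℝ≥0∞} {N : ℕ}
    (hb : ∀ j ≥ N, (∑' i, g1 j i) + ((∑' i, g2 j i) + ∑' i, g3 j i) ≤ C) :
    (∑' i, l1 i) + ((∑' i, l2 i) + ∑' i, l3 i) ≤ C := by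
  have main : ∀ (s1 : Finset ι₁) (s2 : Finset ι₂) (s3 : Finset ι₃),
      (∑ i ∈ s1, l1 i) + ((∑ i ∈ s2, l2 i) + ∑ i ∈ s3, l3 i) ≤ C := by
    intro s1 s2 s3
    have ht : Tendsto
        (fun j => (∑ i ∈ s1, g1 j i) + ((∑ i ∈ s2, g2 j i) + ∑ i ∈ s3, g3 j i))
        atTop (𝓝 ((∑ i ∈ s1, l1 i) + ((∑ i ∈ s2, l2 i) + ∑ i ∈ s3, l3 i))) :=
      (tendsto_finset_sum s1 fun i _ => h1 i).add
        ((tendsto_finset_sum s2 fun i _ => h2 i).add (tendsto_finset_sum s3 fun i _ => h3 i))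
    refine le_of_tendsto ht ?_
    filter_upwards [eventually_ge_atTop N] with j hj
    refine le_trans ?_ (hb j hj)
    gcongr <;> exact ENNReal.sum_le_tsum _
  rw [ENNReal.tsum_eq_iSup_sum (f := l1), ENNReal.tsum_eq_iSup_sum (f := l2),
    ENNReal.tsum_eq_iSup_sum (f := l3)]
  simp only [ENNReal.iSup_add, ENNReal.add_iSup]
  exact iSup_le fun s1 => iSup_le fun s2 => iSup_le fun s3 => main s3 s2 s1

variable {X : Type*} {E : X → Type*} [∀ x, NormedAddCommGroup (E x)]
    [∀ x, InnerProductSpace ℂ (E x)] (m : X → ℝ)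
    (b : X → X → ℝ) (Φ : ∀ x y, E y ≃ₗᵢ[ℂ] E x) (W : ∀ x, E x →ₗ[ℂ] E x)

private lemma stmt11.F_eq (w : ∀ x, E x) :
    magFormNormSq m b Φ W w =
      (∑' x, ENNReal.ofReal (‖w x‖ ^ 2 * m x)) +
        ((∑' p : X × X,
            (1 / 2 : ℝ≥0∞) * ENNReal.ofReal (b p.1 p.2 * ‖w p.1 - Φ p.1 p.2 (w p.2)‖ ^ 2)) +
          ∑' x, ENNReal.ofReal (⟪W x (w x), w x⟫).re) := by
  simp only [magFormNormSq, magEnergy, ENNReal.tsum_mul_left]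

private lemma stmt11.Fadd (hb0 : ∀ x y, 0 ≤ b x y) (hm : ∀ x, 0 ≤ m x)
    (hW : ∀ x (w : E x), 0 ≤ (⟪W x w, w⟫).re) (a a' : ∀ x, E x) :
    magFormNormSq m b Φ W (a + a') ≤
      2 * magFormNormSq m b Φ W a + 2 * magFormNormSq m b Φ W a' := by
  have h1 : (∑' x, ENNReal.ofReal (‖(a + a') x‖ ^ 2 * m x)) ≤
      2 * (∑' x, ENNReal.ofReal (‖a x‖ ^ 2 * m x)) +
      2 * (∑' x, ENNReal.ofReal (‖a' x‖ ^ 2 * m x)) := by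
    calc (∑' x, ENNReal.ofReal (‖(a + a') x‖ ^ 2 * m x))
        ≤ ∑' x, (2 * ENNReal.ofReal (‖a x‖ ^ 2 * m x) +
            2 * ENNReal.ofReal (‖a' x‖ ^ 2 * m x)) := by
          refine ENNReal.tsum_le_tsum fun x => stmt11.ofRealLeTwo ?_
          have h := mul_le_mul_of_nonneg_right (stmt11.normSqAdd (a x) (a' x)) (hm x)
          simp only [Pi.add_apply]
          nlinarith
      _ = _ := by rw [ENNReal.tsum_add, ENNReal.tsum_mul_left, ENNReal.tsum_mul_left]
  have h2 : (∑' p : X × X,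
        ENNReal.ofReal (b p.1 p.2 * ‖(a + a') p.1 - Φ p.1 p.2 ((a + a') p.2)‖ ^ 2)) ≤
      2 * (∑' p : X × X, ENNReal.ofReal (b p.1 p.2 * ‖a p.1 - Φ p.1 p.2 (a p.2)‖ ^ 2)) +
      2 * (∑' p : X × X, ENNReal.ofReal (b p.1 p.2 * ‖a' p.1 - Φ p.1 p.2 (a' p.2)‖ ^ 2)) := by
    calc (∑' p : X × X,
          ENNReal.ofReal (b p.1 p.2 * ‖(a + a') p.1 - Φ p.1 p.2 ((a + a') p.2)‖ ^ 2))
        ≤ ∑' p : X × X,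
            (2 * ENNReal.ofReal (b p.1 p.2 * ‖a p.1 - Φ p.1 p.2 (a p.2)‖ ^ 2) +
             2 * ENNReal.ofReal (b p.1 p.2 * ‖a' p.1 - Φ p.1 p.2 (a' p.2)‖ ^ 2)) := by
          refine ENNReal.tsum_le_tsum fun p => stmt11.ofRealLeTwo ?_
          have hvec : (a + a') p.1 - Φ p.1 p.2 ((a + a') p.2) =
              (a p.1 - Φ p.1 p.2 (a p.2)) + (a' p.1 - Φ p.1 p.2 (a' p.2)) := by
            simp only [Pi.add_apply, map_add]; abel
          rw [hvec]
          have h := mul_le_mul_of_nonneg_left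
            (stmt11.normSqAdd (a p.1 - Φ p.1 p.2 (a p.2)) (a' p.1 - Φ p.1 p.2 (a' p.2)))
            (hb0 p.1 p.2)
          nlinarith
      _ = _ := by rw [ENNReal.tsum_add, ENNReal.tsum_mul_left, ENNReal.tsum_mul_left]
  have h3 : (∑' x, ENNReal.ofReal (⟪W x ((a + a') x), (a + a') x⟫).re) ≤
      2 * (∑' x, ENNReal.ofReal (⟪W x (a x), a x⟫).re) +
      2 * (∑' x, ENNReal.ofReal (⟪W x (a' x), a' x⟫).re) := by
    calc (∑' x, ENNReal.ofReal (⟪W x ((a + a') x), (a + a') x⟫).re)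
        ≤ ∑' x, (2 * ENNReal.ofReal (⟪W x (a x), a x⟫).re +
            2 * ENNReal.ofReal (⟪W x (a' x), a' x⟫).re) := by
          refine ENNReal.tsum_le_tsum fun x => stmt11.ofRealLeTwo ?_
          have h := hW x (a x - a' x)
          simp only [Pi.add_apply, map_add, map_sub, inner_add_left, inner_add_right,
            inner_sub_left, inner_sub_right, Complex.add_re, Complex.sub_re] at h ⊢
          linarith
      _ = _ := by rw [ENNReal.tsum_add, ENNReal.tsum_mul_left, ENNReal.tsum_mul_left]
  simp only [magFormNormSq, magEnergy]
  refine le_trans (add_le_add h1 (add_le_add (mul_le_mul_right h2 (1 / 2 : ℝ≥0∞)) h3))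
    (le_of_eq ?_)
  generalize (1 / 2 : ℝ≥0∞) = k
  ring

end StmtElevenAux

/-- For a weighted graph `(X,b,c,m)`, a Hermitian vector bundle `E` with
unitary connection `Φ` and a pointwise positive bundle endomorphism `W`, the magnetic form
`Q^(N)_{Φ,b,W}` is closed: its domain, equipped with the form norm
`(‖u‖²_{ℓ²} + Q̃_{Φ,b,W}(u))^{1/2}`, is complete, i.e. every Cauchy sequence in the domain
converges in the form norm to an element of the domain. -/
theorem stmt11 {X : Type*} [Countable X]
    (b : X → X → ℝ) (hb0 : ∀ x y, 0 ≤ b x y) (hbdiag : ∀ x, b x x = 0)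
    (hbsymm : ∀ x y, b x y = b y x) (hbsum : ∀ x, Summable fun y => b x y)
    (c : X → ℝ) (hc : ∀ x, 0 ≤ c x) (m : X → ℝ) (hm : ∀ x, 0 < m x)
    (E : X → Type*) [∀ x, NormedAddCommGroup (E x)] [∀ x, InnerProductSpace ℂ (E x)]
    [∀ x, FiniteDimensional ℂ (E x)]
    (Φ : ∀ x y, E y ≃ₗᵢ[ℂ] E x) (hΦ : ∀ x y, Φ x y = (Φ y x).symm)
    (W : ∀ x, E x →ₗ[ℂ] E x) (hW : ∀ x (w : E x), 0 ≤ (⟪W x w, w⟫).re)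
    (u : ℕ → ∀ x, E x) (hdom : ∀ n, inMagDom m b Φ W (u n))
    (hcauchy : ∀ ε > (0 : ℝ), ∃ N : ℕ, ∀ i ≥ N, ∀ j ≥ N,
      magFormNormSq m b Φ W (u i - u j) < ENNReal.ofReal ε) :
    ∃ v : ∀ x, E x, inMagDom m b Φ W v ∧ ∀ ε > (0 : ℝ), ∃ N : ℕ, ∀ n ≥ N,
      magFormNormSq m b Φ W (u n - v) < ENNReal.ofReal ε := by
  classical
  open Filter Topology in
  -- Step 1: pointwise limits
  have hpt : ∀ x : X, ∃ vx : E x, Filter.Tendsto (fun n => u n x) Filter.atTop (nhds vx) := by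
    intro x
    haveI : CompleteSpace (E x) := FiniteDimensional.complete ℂ (E x)
    apply cauchySeq_tendsto_of_complete
    rw [Metric.cauchySeq_iff]
    intro δ hδ
    have hpos : (0 : ℝ) < δ ^ 2 * m x := mul_pos (pow_pos hδ 2) (hm x)
    obtain ⟨N, hN⟩ := hcauchy (δ ^ 2 * m x) hpos
    refine ⟨N, fun i hi j hj => ?_⟩
    have h1 : ENNReal.ofReal (‖(u i - u j) x‖ ^ 2 * m x) ≤
        magFormNormSq m b Φ W (u i - u j) :=
      le_trans (ENNReal.le_tsum x) le_self_add
    have h2 := lt_of_le_of_lt h1 (hN i hi j hj)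
    rw [ENNReal.ofReal_lt_ofReal_iff hpos] at h2
    simp only [Pi.sub_apply] at h2
    rw [dist_eq_norm]
    have h3 : ‖u i x - u j x‖ ^ 2 < δ ^ 2 :=
      lt_of_mul_lt_mul_right h2 (hm x).le
    exact lt_of_pow_lt_pow_left₀ 2 hδ.le h3
  choose v hv using hpt
  -- Step 2: pointwise convergence of the individual energy terms
  have tends : ∀ (s : ℕ → ∀ x, E x) (t : ∀ x, E x),
      (∀ x, Filter.Tendsto (fun j => s j x) Filter.atTop (nhds (t x))) →
      (∀ x, Filter.Tendsto (fun j => ENNReal.ofReal (‖s j x‖ ^ 2 * m x)) Filter.atTop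
        (nhds (ENNReal.ofReal (‖t x‖ ^ 2 * m x)))) ∧
      (∀ p : X × X, Filter.Tendsto
        (fun j => (1 / 2 : ℝ≥0∞) *
          ENNReal.ofReal (b p.1 p.2 * ‖s j p.1 - Φ p.1 p.2 (s j p.2)‖ ^ 2)) Filter.atTop
        (nhds ((1 / 2 : ℝ≥0∞) *
          ENNReal.ofReal (b p.1 p.2 * ‖t p.1 - Φ p.1 p.2 (t p.2)‖ ^ 2)))) ∧
      (∀ x, Filter.Tendsto (fun j => ENNReal.ofReal (⟪W x (s j x), s j x⟫).re) Filter.atTop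
        (nhds (ENNReal.ofReal (⟪W x (t x), t x⟫).re))) := by
    intro s t hst
    refine ⟨fun x => ?_, fun p => ?_, fun x => ?_⟩
    · exact (ENNReal.continuous_ofReal.tendsto _).comp (((hst x).norm.pow 2).mul_const (m x))
    · refine ENNReal.Tendsto.const_mul ?_ (Or.inr (by norm_num))
      refine (ENNReal.continuous_ofReal.tendsto _).comp ?_
      exact (((hst p.1).sub
        (((Φ p.1 p.2).continuous.tendsto _).comp (hst p.2))).norm.pow 2).const_mul (b p.1 p.2)
    · have hWc : Continuous (W x) := (W x).continuous_of_finiteDimensional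
      refine (ENNReal.continuous_ofReal.tendsto _).comp ?_
      exact (Complex.continuous_re.tendsto _).comp (((hWc.tendsto _).comp (hst x)).inner (hst x))
  -- Step 3: Fatou-type bound for the form norm
  have keyF : ∀ (s : ℕ → ∀ x, E x) (t : ∀ x, E x),
      (∀ x, Filter.Tendsto (fun j => s j x) Filter.atTop (nhds (t x))) →
      ∀ (C : ℝ≥0∞) (N : ℕ), (∀ j ≥ N, magFormNormSq m b Φ W (s j) ≤ C) →
      magFormNormSq m b Φ W t ≤ C := by
    intro s t hst C N hb'
    obtain ⟨T1, T2, T3⟩ := tends s t hst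
    rw [stmt11.F_eq]
    refine stmt11.key3 T1 T2 T3 (N := N) fun j hj => ?_
    rw [← stmt11.F_eq]
    exact hb' j hj
  -- finiteness of the form norm of each `u n`
  have hFfin : ∀ n, magFormNormSq m b Φ W (u n) < ⊤ := by
    intro n
    have h1 : (∑' x, ENNReal.ofReal (‖u n x‖ ^ 2 * m x)) < ⊤ := by
      rw [← ENNReal.ofReal_tsum_of_nonneg
        (fun x => mul_nonneg (by positivity) (hm x).le) (hdom n).1]
      exact ENNReal.ofReal_lt_top
    exact ENNReal.add_lt_top.mpr ⟨h1, (hdom n).2⟩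
  -- a uniform bound on the form norms
  obtain ⟨N₀, hN₀⟩ := hcauchy 1 one_pos
  set C₀ : ℝ≥0∞ := 2 * ENNReal.ofReal 1 + 2 * magFormNormSq m b Φ W (u N₀) with hC₀
  have hbnd : ∀ j ≥ N₀, magFormNormSq m b Φ W (u j) ≤ C₀ := by
    intro j hj
    have h := stmt11.Fadd m b Φ W hb0 (fun x => (hm x).le) hW (u j - u N₀) (u N₀)
    rw [sub_add_cancel] at h
    refine h.trans ?_
    rw [hC₀]
    gcongr
    exact (hN₀ j hj N₀ le_rfl).le
  have hFv : magFormNormSq m b Φ W v ≤ C₀ := keyF u v hv C₀ N₀ hbnd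
  have hC₀fin : C₀ < ⊤ := by
    rw [hC₀]
    exact ENNReal.add_lt_top.mpr
      ⟨ENNReal.mul_lt_top (by norm_num) ENNReal.ofReal_lt_top,
       ENNReal.mul_lt_top (by norm_num) (hFfin N₀)⟩
  have hFvlt : magFormNormSq m b Φ W v < ⊤ := lt_of_le_of_lt hFv hC₀fin
  refine ⟨v, ⟨?_, ?_⟩, ?_⟩
  · -- `v` is an ℓ² section
    show Summable fun x => ‖v x‖ ^ 2 * m x
    have hne : (∑' x, ENNReal.ofReal (‖v x‖ ^ 2 * m x)) ≠ ⊤ :=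
      ne_top_of_le_ne_top hFvlt.ne le_self_add
    exact (ENNReal.summable_toReal hne).congr fun x =>
      ENNReal.toReal_ofReal (mul_nonneg (by positivity) (hm x).le)
  · -- the energy of `v` is finite
    exact lt_of_le_of_lt (le_add_self : magEnergy b Φ W v ≤ magFormNormSq m b Φ W v) hFvlt
  · -- convergence in the form norm
    intro ε hε
    obtain ⟨N, hN⟩ := hcauchy (ε / 2) (half_pos hε)
    refine ⟨N, fun n hn => ?_⟩
    have hlim : ∀ x, Filter.Tendsto (fun j => (u n - u j) x) Filter.atTop
        (nhds ((u n - v) x)) := by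
      intro x
      simpa only [Pi.sub_apply] using Filter.Tendsto.sub tendsto_const_nhds (hv x)
    have hb' : ∀ j ≥ N, magFormNormSq m b Φ W (u n - u j) ≤ ENNReal.ofReal (ε / 2) :=
      fun j hj => (hN n hn j hj).le
    have h := keyF (fun j => u n - u j) (u n - v) hlim (ENNReal.ofReal (ε / 2)) N hb'
    refine lt_of_le_of_lt h ?_
    rw [ENNReal.ofReal_lt_ofReal_iff hε]
    linarith
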